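/- Let A ∈ ℝmax^{p×n}, B ∈ 𝔾^{p×n}, c ∈ ℝmax^p, d ∈ 𝔾^p, let e be an n-dimensional row vector over ℝmax, f an n-dimensional row vector over 𝔾, g ∈ ℝmax, h ∈ 𝔾 with h ≠ +∞, and suppose e and g are not all equal to -∞. Let Q be the tropical polyhedron with mixed constraints defined by the system A x ⊕ c ≤𝔾 B x ⊕ d together with: for each i ∈ [n], the inequality fᵢxᵢ ≤𝔾 (0̲ ⊗ e)x ⊕ 0̲ ⊗ g if fᵢ ∈ ℝmax, the inequality |fᵢ|xᵢ ≤𝔾 e x ⊕ g if fᵢ ∈ ℝ⁻, and the inequality xᵢ ≤𝔾 -∞ if fᵢ = +∞; the inequality h ≤𝔾 (0̲ ⊗ e)x ⊕ 0̲ ⊗ g if h ∈ ℝmax and the inequality |h| ≤𝔾 e x ⊕ g if h ∈ ℝ⁻; and, if g = -∞, the inequality 0 ≤𝔾 ⊕_{i : eᵢ ≠ -∞} (+∞)xᵢ. Then the implication 'every x ∈ ℝmaxⁿ with A x ⊕ c ≤𝔾 B x ⊕ d satisfies e x ⊕ g ≤𝔾 f x ⊕ h' holds if, and only if, Q is empty.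 -/

import Mathlib

attribute [local instance] Classical.propDecidable

/-- The germ semiring `𝔾 = ℝmax ∪ {+∞} ∪ ℝ⁻`: `negInf` is `-∞`, `fin a` is the
real number `a` (an element of `ℝmax`), `germ a` is the germ `a̲ ∈ ℝ⁻`, and
`posInf` is `+∞`. -/
inductive TGerm where
  | negInf : TGerm
  | fin : ℝ → TGerm
  | germ : ℝ → TGerm
  | posInf : TGerm

namespace TGerm

/-- The modulus `|x| ∈ ℝmax ∪ {+∞} = EReal` of an element of `𝔾`. -/
noncomputable def modulus : TGerm → EReal
  | negInf => ⊥
  | fin a => (a : EReal)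
  | germ a => (a : EReal)
  | posInf => ⊤

/-- Whether `x` belongs to the copy `ℝ⁻` of perturbed reals. -/
def isPert : TGerm → Bool
  | germ _ => true
  | _ => false

/-- The total order `≤𝔾` on `𝔾`: `x ≤𝔾 y` iff `|x| < |y|` when
`x ∈ ℝmax ∪ {+∞}` and `y ∈ ℝ⁻`, and `|x| ≤ |y|` otherwise. -/
def gle (x y : TGerm) : Prop :=
  if isPert x = false ∧ isPert y = true then modulus x < modulus y
  else modulus x ≤ modulus y

/-- The valuation `x(ε) ∈ ℝmax ∪ {+∞} = EReal` of `x ∈ 𝔾` at `ε`. -/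
noncomputable def val : TGerm → ℝ → EReal
  | negInf, _ => ⊥
  | fin a, _ => (a : EReal)
  | germ a, ε => ((a - ε : ℝ) : EReal)
  | posInf, _ => ⊤

/-- The addition `⊕` of `𝔾`: the maximum with respect to `≤𝔾`. -/
noncomputable def add (x y : TGerm) : TGerm := if gle x y then y else x

/-- The minimum with respect to `≤𝔾`. -/
noncomputable def gmin (x y : TGerm) : TGerm := if gle x y then x else y

/-- The tropical sum `⊕ᵢ f i` of a finite family in `𝔾`. -/
noncomputable def gsum {n : ℕ} (f : Fin n → TGerm) : TGerm :=
  (List.ofFn f).foldr add negInf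

/-- The minimum (w.r.t. `≤𝔾`) of a finite family in `𝔾`. -/
noncomputable def ginf {n : ℕ} (f : Fin n → TGerm) : TGerm :=
  (List.ofFn f).foldr gmin posInf

/-- The multiplication `⊗` of `𝔾`. -/
def mul : TGerm → TGerm → TGerm
  | negInf, _ => negInf
  | _, negInf => negInf
  | posInf, _ => posInf
  | _, posInf => posInf
  | fin a, fin b => fin (a + b)
  | fin a, germ b => germ (a + b)
  | germ a, fin b => germ (a + b)
  | germ a, germ b => germ (a + b)

end TGerm

/-- The embedding of `ℝmax = ℝ ∪ {-∞}` into the germ semiring `𝔾`. -/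
def toGerm (x : WithBot ℝ) : TGerm := WithBot.recBotCoe TGerm.negInf TGerm.fin x

/-- The embedding of `ℝmax = ℝ ∪ {-∞}` into `ℝmax ∪ {+∞} = EReal`. -/
noncomputable def rmaxToEReal (x : WithBot ℝ) : EReal :=
  WithBot.recBotCoe ⊥ (fun a : ℝ => (a : EReal)) x

/-- The germ `e x ⊕ g`, where `e` is a row vector over `ℝmax` and `g ∈ ℝmax`. -/
noncomputable def exG {n : ℕ} (e : Fin n → WithBot ℝ) (g : WithBot ℝ)
    (x : Fin n → WithBot ℝ) : TGerm :=
  TGerm.add (TGerm.gsum fun j => (toGerm (e j)).mul (toGerm (x j))) (toGerm g)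

/-- The germ `(0̲ ⊗ e) x ⊕ 0̲ ⊗ g`. -/
noncomputable def exG0 {n : ℕ} (e : Fin n → WithBot ℝ) (g : WithBot ℝ)
    (x : Fin n → WithBot ℝ) : TGerm :=
  TGerm.add (TGerm.gsum fun j => ((TGerm.germ 0).mul (toGerm (e j))).mul (toGerm (x j)))
    ((TGerm.germ 0).mul (toGerm g))

/-- The constraint associated with the coefficient `fᵢ`:
`fᵢxᵢ ≤𝔾 (0̲ ⊗ e)x ⊕ 0̲ ⊗ g` if `fᵢ ∈ ℝmax`, `|fᵢ|xᵢ ≤𝔾 e x ⊕ g` if `fᵢ ∈ ℝ⁻`, and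
`xᵢ ≤𝔾 -∞` if `fᵢ = +∞`. -/
noncomputable def fCon {n : ℕ} (e : Fin n → WithBot ℝ) (g : WithBot ℝ)
    (f : Fin n → TGerm) (x : Fin n → WithBot ℝ) (i : Fin n) : Prop :=
  match f i with
  | TGerm.posInf => (toGerm (x i)).gle TGerm.negInf
  | TGerm.germ r => ((TGerm.fin r).mul (toGerm (x i))).gle (exG e g x)
  | fv => (fv.mul (toGerm (x i))).gle (exG0 e g x)

/-- The constraint associated with `h`: `h ≤𝔾 (0̲ ⊗ e)x ⊕ 0̲ ⊗ g` if `h ∈ ℝmax` and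
`|h| ≤𝔾 e x ⊕ g` if `h ∈ ℝ⁻` (the case `h = +∞` is excluded by hypothesis). -/
noncomputable def hCon {n : ℕ} (e : Fin n → WithBot ℝ) (g : WithBot ℝ) (h : TGerm)
    (x : Fin n → WithBot ℝ) : Prop :=
  match h with
  | TGerm.germ r => (TGerm.fin r).gle (exG e g x)
  | TGerm.posInf => True
  | hv => hv.gle (exG0 e g x)

/-- The constraint `0 ≤𝔾 ⊕_{i : eᵢ ≠ -∞} (+∞)xᵢ`, imposed when `g = -∞`. -/
noncomputable def gCon {n : ℕ} (e : Fin n → WithBot ℝ) (g : WithBot ℝ)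
    (x : Fin n → WithBot ℝ) : Prop :=
  g = ⊥ → (TGerm.fin 0).gle
    (TGerm.gsum fun i =>
      if e i = ⊥ then TGerm.negInf else TGerm.posInf.mul (toGerm (x i)))


/-! For every `x`, the germ `e x ⊕ g` lies in `ℝmax`, and `≤𝔾` is a linear order. So the
implication fails at `x` exactly when `e x ⊕ g` is a real number `a` strictly above every `fᵢxᵢ`
and above `h`. Strictly below `a` means at most `a̲ = 0̲ ⊗ a` for a term in `ℝmax`, modulus at
most `a` for a term in `ℝ⁻`, and `-∞` for a term `(+∞)xᵢ`: these are the constraints on `fᵢ`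
and `h` defining `Q`, while the last constraint says `e x ⊕ g ≠ -∞`. -/

namespace TGerm

/-- `≤𝔾` is the lexicographic order on `(|x|, x ∉ ℝ⁻)`. -/
noncomputable def key (x : TGerm) : EReal ×ₗ Bool := toLex (x.modulus, !x.isPert)

lemma key_injective : Function.Injective key := by
  intro x y hxy
  cases x <;> cases y <;> simp_all [key, modulus, isPert]

lemma gle_iff_key_le (x y : TGerm) : x.gle y ↔ key x ≤ key y := by
  rw [key, key, Prod.Lex.toLex_le_toLex]
  cases hx : x.isPert <;> cases hy : y.isPert <;> simp [gle, hx, hy, le_iff_lt_or_eq]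

noncomputable instance : LinearOrder TGerm := LinearOrder.lift' key key_injective

lemma le_iff_key_le {x y : TGerm} : x ≤ y ↔ key x ≤ key y := Iff.rfl

lemma lt_iff_key_lt {x y : TGerm} : x < y ↔ key x < key y := Iff.rfl

lemma gle_iff_le {x y : TGerm} : x.gle y ↔ x ≤ y := gle_iff_key_le x y

noncomputable instance : OrderBot TGerm where
  bot := negInf
  bot_le x := by cases x <;> simp [le_iff_key_le, key, modulus, isPert, Prod.Lex.toLex_le_toLex']

lemma add_eq_max (x y : TGerm) : x.add y = max x y := by
  simp only [add, gle_iff_le, max_def]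
  split_ifs <;> rfl

lemma gsum_eq_sup {n : ℕ} (f : Fin n → TGerm) : gsum f = Finset.univ.sup f := by
  induction n with
  | zero => rfl
  | succ n ih =>
    rw [gsum, List.ofFn_succ, List.foldr_cons, ← gsum, ih, add_eq_max, Fin.univ_succ,
      Finset.sup_cons, Finset.sup_map]
    rfl

lemma mul_assoc (x y z : TGerm) : (x.mul y).mul z = x.mul (y.mul z) := by
  cases x <;> cases y <;> cases z <;> simp [mul, add_assoc]

lemma monotone_germ_zero_mul : Monotone (mul (germ 0)) := by
  intro x y hxy
  cases x <;> cases y <;>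
    simp_all [mul, le_iff_key_le, key, modulus, isPert, Prod.Lex.toLex_le_toLex']

end TGerm

open TGerm

lemma monotone_toGerm : Monotone toGerm := by
  intro a b hab
  induction a using WithBot.recBotCoe with
  | bot => exact bot_le
  | coe a =>
    induction b using WithBot.recBotCoe with
    | bot => simp at hab
    | coe b =>
      simpa [toGerm, le_iff_key_le, key, modulus, isPert, Prod.Lex.toLex_le_toLex'] using hab

lemma toGerm_bot : toGerm ⊥ = ⊥ := rfl

lemma toGerm_add (a b : WithBot ℝ) : toGerm (a + b) = (toGerm a).mul (toGerm b) := by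
  induction a using WithBot.recBotCoe <;> induction b using WithBot.recBotCoe <;> rfl

lemma toGerm_finset_sup {ι : Type*} (s : Finset ι) (u : ι → WithBot ℝ) :
    toGerm (s.sup u) = s.sup (toGerm ∘ u) :=
  Finset.apply_sup_eq_sup_comp _ (fun _ _ => monotone_toGerm.map_max) rfl

lemma exG_eq {n : ℕ} (e : Fin n → WithBot ℝ) (g : WithBot ℝ) (x : Fin n → WithBot ℝ) :
    exG e g x = toGerm ((Finset.univ.sup fun j => e j + x j) ⊔ g) := by
  rw [exG, add_eq_max, gsum_eq_sup, monotone_toGerm.map_max, toGerm_finset_sup]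
  simp only [Function.comp_def, toGerm_add]

lemma exG0_eq {n : ℕ} (e : Fin n → WithBot ℝ) (g : WithBot ℝ) (x : Fin n → WithBot ℝ) :
    exG0 e g x = (germ 0).mul (exG e g x) := by
  rw [exG0, exG, add_eq_max, add_eq_max, monotone_germ_zero_mul.map_max, gsum_eq_sup,
    gsum_eq_sup, Finset.apply_sup_eq_sup_comp _ (fun _ _ => monotone_germ_zero_mul.map_max) rfl]
  simp only [Function.comp_def, TGerm.mul_assoc]

section Constraints

variable {n : ℕ} {e : Fin n → WithBot ℝ} {g : WithBot ℝ} {x : Fin n → WithBot ℝ} {a : ℝ}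

lemma fCon_iff (f : Fin n → TGerm) (i : Fin n) (hE : exG e g x = fin a) :
    fCon e g f x i ↔ (f i).mul (toGerm (x i)) < fin a := by
  have hE0 : exG0 e g x = germ a := by rw [exG0_eq, hE, mul, zero_add]
  unfold fCon
  cases f i <;> induction x i using WithBot.recBotCoe <;>
    simp [hE, hE0, gle_iff_le, toGerm, mul, lt_iff_key_lt, le_iff_key_le, key, modulus, isPert,
      Prod.Lex.toLex_le_toLex', Prod.Lex.toLex_lt_toLex', Bool.le_iff_imp]

lemma hCon_iff {h : TGerm} (hh : h ≠ posInf) (hE : exG e g x = fin a) :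
    hCon e g h x ↔ h < fin a := by
  have hE0 : exG0 e g x = germ a := by rw [exG0_eq, hE, mul, zero_add]
  cases h <;>
    simp_all [hCon, gle_iff_le, lt_iff_key_lt, le_iff_key_le, key, modulus, isPert,
      Prod.Lex.toLex_le_toLex', Prod.Lex.toLex_lt_toLex', Bool.le_iff_imp]

lemma fin_zero_le_posInf_mul_iff (u v : WithBot ℝ) :
    fin 0 ≤ (if u = ⊥ then negInf else posInf.mul (toGerm v)) ↔ u + v ≠ ⊥ := by
  induction u using WithBot.recBotCoe <;> induction v using WithBot.recBotCoe <;>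
    simp [toGerm, mul, le_iff_key_le, key, modulus, isPert, Prod.Lex.toLex_le_toLex']

lemma bot_lt_fin (a : ℝ) : ⊥ < fin a := bot_lt_iff_ne_bot.mpr nofun

lemma gCon_iff : gCon e g x ↔ (Finset.univ.sup fun j => e j + x j) ⊔ g ≠ ⊥ := by
  by_cases hg : g = ⊥
  · simp [gCon, hg, gle_iff_le, gsum_eq_sup, Finset.le_sup_iff (bot_lt_fin 0),
      fin_zero_le_posInf_mul_iff]
  · simp [gCon, hg]

lemma not_exG_le_iff (f : Fin n → TGerm) {h : TGerm} (hh : h ≠ posInf) :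
    ¬ (exG e g x).gle (add (gsum fun j => (f j).mul (toGerm (x j))) h) ↔
      (∀ i, fCon e g f x i) ∧ hCon e g h x ∧ gCon e g x := by
  rw [gle_iff_le, not_le, add_eq_max, gsum_eq_sup, gCon_iff]
  cases hw : (Finset.univ.sup fun j => e j + x j) ⊔ g using WithBot.recBotCoe with
  | bot => simp [exG_eq, hw, toGerm_bot]
  | coe a =>
    have hE : exG e g x = fin a := by rw [exG_eq, hw]; rfl
    simp [hE, Finset.sup_lt_iff (bot_lt_fin a), fCon_iff f _ hE, hCon_iff hh hE]

end Constraints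

theorem statement_15_general (n p : ℕ)
    (A : Fin p → Fin n → WithBot ℝ) (B : Fin p → Fin n → TGerm)
    (c : Fin p → WithBot ℝ) (d : Fin p → TGerm)
    (e : Fin n → WithBot ℝ) (f : Fin n → TGerm) (g : WithBot ℝ) (h : TGerm)
    (hh : h ≠ TGerm.posInf) :
    (∀ x : Fin n → WithBot ℝ,
        (∀ i, (TGerm.add (TGerm.gsum fun j => (toGerm (A i j)).mul (toGerm (x j)))
                  (toGerm (c i))).gle
                (TGerm.add (TGerm.gsum fun j => (B i j).mul (toGerm (x j))) (d i))) →
        (exG e g x).gle (TGerm.add (TGerm.gsum fun j => (f j).mul (toGerm (x j))) h))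
    ↔ { x : Fin n → WithBot ℝ |
          (∀ i, (TGerm.add (TGerm.gsum fun j => (toGerm (A i j)).mul (toGerm (x j)))
                    (toGerm (c i))).gle
                  (TGerm.add (TGerm.gsum fun j => (B i j).mul (toGerm (x j))) (d i))) ∧
          (∀ i, fCon e g f x i) ∧ hCon e g h x ∧ gCon e g x } = ∅ := by
  simp only [Set.eq_empty_iff_forall_notMem, Set.mem_ofPred_eq]
  refine forall_congr' fun x => ?_
  rw [← not_exG_le_iff f hh]
  tauto

theorem statement_15 (n p : ℕ)
    (A : Fin p → Fin n → WithBot ℝ) (B : Fin p → Fin n → TGerm)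
    (c : Fin p → WithBot ℝ) (d : Fin p → TGerm)
    (e : Fin n → WithBot ℝ) (f : Fin n → TGerm) (g : WithBot ℝ) (h : TGerm)
    (hh : h ≠ TGerm.posInf)
    (hne : ¬ (g = ⊥ ∧ ∀ i, e i = ⊥)) :
    (∀ x : Fin n → WithBot ℝ,
        (∀ i, (TGerm.add (TGerm.gsum fun j => (toGerm (A i j)).mul (toGerm (x j)))
                  (toGerm (c i))).gle
                (TGerm.add (TGerm.gsum fun j => (B i j).mul (toGerm (x j))) (d i))) →
        (exG e g x).gle (TGerm.add (TGerm.gsum fun j => (f j).mul (toGerm (x j))) h))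
    ↔ { x : Fin n → WithBot ℝ |
          (∀ i, (TGerm.add (TGerm.gsum fun j => (toGerm (A i j)).mul (toGerm (x j)))
                    (toGerm (c i))).gle
                  (TGerm.add (TGerm.gsum fun j => (B i j).mul (toGerm (x j))) (d i))) ∧
          (∀ i, fCon e g f x i) ∧ hCon e g h x ∧ gCon e g x } = ∅ :=
  statement_15_general n p A B c d e f g h hh
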